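/- arXiv:2210.03263 — 2 statements merged into one kernel-verified Lean document; each statement's English description precedes it below -/
import Mathlib

section
/- Let sn(r) = sinh(r), cs(r) = cosh(r), ct(r) = cs(r)/sn(r), A(r) = ∫₀^r sinh(t)^(k-1) dt, and a(r) := k·(A(r)/A'(r))·ct(r). Then a(r) ≥ 1 for all r > 0. -/
/- Since `(sinh^k)' = k sinh^(k-1) cosh` and `cosh` increases on `[0, r]`, we get
`sinh(r)^k ≤ k A(r) cosh(r)`, which is the claim after dividing by `sinh(r)^k = A'(r) sinh(r)`. -/

open Real

/-- `A(r) = ∫₀^r sinh(t)^(k-1) dt` in the hyperbolic case. -/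
noncomputable def Afun (k : ℕ) (r : ℝ) : ℝ := ∫ t in (0:ℝ)..r, Real.sinh t ^ (k - 1)

theorem sinh_pow_eq_integral {k : ℕ} (hk : k ≠ 0) (r : ℝ) :
    sinh r ^ k = ∫ t in (0:ℝ)..r, (k : ℝ) * sinh t ^ (k - 1) * cosh t := by
  rw [intervalIntegral.integral_eq_sub_of_hasDerivAt (f := fun x => sinh x ^ k)
      (fun t _ => (hasDerivAt_sinh t).pow k) (Continuous.intervalIntegrable (by fun_prop) 0 r),
    sinh_zero, zero_pow hk, sub_zero]

theorem sinh_pow_le_mul_Afun_mul_cosh {k : ℕ} (hk : k ≠ 0) {r : ℝ} (hr : 0 ≤ r) :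
    sinh r ^ k ≤ k * Afun k r * cosh r := calc
  sinh r ^ k = ∫ t in (0:ℝ)..r, (k : ℝ) * sinh t ^ (k - 1) * cosh t := sinh_pow_eq_integral hk r
  _ ≤ ∫ t in (0:ℝ)..r, (k : ℝ) * sinh t ^ (k - 1) * cosh r := by
    refine intervalIntegral.integral_mono_on hr (Continuous.intervalIntegrable (by fun_prop) 0 r)
      (Continuous.intervalIntegrable (by fun_prop) 0 r) fun t ht => ?_
    have hsinh : 0 ≤ sinh t := sinh_nonneg_iff.mpr ht.1
    have hcosh : cosh t ≤ cosh r := by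
      rw [cosh_le_cosh, abs_of_nonneg ht.1, abs_of_nonneg hr]
      exact ht.2
    gcongr
  _ = k * Afun k r * cosh r := by
    rw [Afun, intervalIntegral.integral_mul_const, intervalIntegral.integral_const_mul]

/-- in the hyperbolic case, `a(r) := k·(A(r)/A'(r))·coth(r) ≥ 1` for all `r > 0`,
where `A'(r) = sinh(r)^(k-1)`. -/
theorem stmt2 (k : ℕ) (hk : 1 ≤ k) :
    ∀ r : ℝ, 0 < r →
      1 ≤ (k : ℝ) * (Afun k r / Real.sinh r ^ (k - 1)) * (Real.cosh r / Real.sinh r) := by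
  intro r hr
  have hsinh : 0 < sinh r := sinh_pos_iff.mpr hr
  have hpow : sinh r ^ (k - 1) * sinh r = sinh r ^ k := by
    rw [← pow_succ, Nat.sub_add_cancel hk]
  have hrewrite : (k : ℝ) * (Afun k r / sinh r ^ (k - 1)) * (cosh r / sinh r)
      = k * Afun k r * cosh r / sinh r ^ k := by
    rw [← hpow]
    field_simp
  rw [hrewrite, one_le_div (pow_pos hsinh k)]
  exact sinh_pow_le_mul_Afun_mul_cosh (by omega) hr.le
end

section
/- Fix R ∈ (0, π/2) and s_y ∈ [0, R) with cos(R + s_y) > 0, and define in the spherical case u(s) := arccos(cos(s - s_y)·cos(R)/cos(s)) for s ∈ (-R, R). Then u'(s) ≤ 0 for all s ∈ (-R, R). -/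
open Real Set

/-!
Since `cos (t - a) * c / cos t = c * (cos a + sin a * tan t)`, the argument of `arccos` is a
nondecreasing function of `s` on `(-π/2, π/2)`, with derivative `cos R * sin s_y / cos s ^ 2 ≥ 0`.
Its values at `-R` and `R` are `cos (R + s_y) > 0` and `cos (R - s_y) < 1`, so on `(-R, R)` it
stays in `(0, 1)`, where `arccos` is differentiable and decreasing; the chain rule gives `u' ≤ 0`.
-/

theorem cos_sub_mul_div_cos_eq (a c : ℝ) {t : ℝ} (ht : cos t ≠ 0) :
    cos (t - a) * c / cos t = c * (cos a + sin a * tan t) := by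
  rw [cos_sub, tan_eq_sin_div_cos]
  field_simp

theorem monotoneOn_cos_sub_mul_div_cos {a c : ℝ} (hc : 0 ≤ c) (ha : 0 ≤ sin a) :
    MonotoneOn (fun t => cos (t - a) * c / cos t) (Ioo (-(π / 2)) (π / 2)) := by
  intro x hx y hy hxy
  dsimp only
  rw [cos_sub_mul_div_cos_eq a c (cos_pos_of_mem_Ioo hx).ne',
    cos_sub_mul_div_cos_eq a c (cos_pos_of_mem_Ioo hy).ne']
  gcongr
  exact strictMonoOn_tan.monotoneOn hx hy hxy

theorem hasDerivAt_cos_sub_mul_div_cos (a c : ℝ) {t : ℝ} (ht : cos t ≠ 0) :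
    HasDerivAt (fun t => cos (t - a) * c / cos t) (c * sin a / cos t ^ 2) t := by
  refine ((((hasDerivAt_id t).sub_const a).cos.mul_const c).div
    (hasDerivAt_cos t) ht).congr_deriv ?_
  have hsin : sin a = sin t * cos (t - a) - cos t * sin (t - a) := by
    rw [← sin_sub, sub_sub_cancel]
  rw [hsin, id]
  ring

theorem stmt7_general (R sy : ℝ) (hR' : R < Real.pi / 2)
    (hsy : 0 ≤ sy) (hsyR : sy < R) (hcos : 0 < Real.cos (R + sy))
    (u : ℝ → ℝ)
    (hu : ∀ s, u s = Real.arccos (Real.cos (s - sy) * Real.cos R / Real.cos s))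
    (s : ℝ) (hs : -R < s) (hs' : s < R) :
    deriv u s ≤ 0 := by
  set f : ℝ → ℝ := fun t => cos (t - sy) * cos R / cos t
  have hI : ∀ t, -R ≤ t → t ≤ R → t ∈ Ioo (-(π / 2)) (π / 2) :=
    fun t h₁ h₂ => ⟨by linarith, by linarith⟩
  have hcR : 0 < cos R := cos_pos_of_mem_Ioo (hI R (by linarith) le_rfl)
  have hsin : 0 ≤ sin sy := sin_nonneg_of_nonneg_of_le_pi hsy (by linarith [pi_gt_three])
  have hf_mono : MonotoneOn f (Ioo (-(π / 2)) (π / 2)) :=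
    monotoneOn_cos_sub_mul_div_cos hcR.le hsin
  have hf_lower : cos (R + sy) ≤ f s :=
    calc cos (R + sy) = f (-R) := by
          show _ = cos (-R - sy) * cos R / cos (-R)
          rw [cos_neg, mul_div_cancel_right₀ _ hcR.ne', ← neg_add', cos_neg]
      _ ≤ f s := hf_mono (hI (-R) le_rfl (by linarith)) (hI s hs.le hs'.le) hs.le
  have hf_upper : f s < 1 :=
    calc f s ≤ f R := hf_mono (hI s hs.le hs'.le) (hI R (by linarith) le_rfl) hs'.le
      _ = cos (R - sy) := mul_div_cancel_right₀ _ hcR.ne'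
      _ < cos 0 := cos_lt_cos_of_nonneg_of_le_pi le_rfl (by linarith) (by linarith)
      _ = 1 := cos_zero
  have hderiv : HasDerivAt u (-(1 / √(1 - f s ^ 2)) * (cos R * sin sy / cos s ^ 2)) s := by
    rw [show u = arccos ∘ f from funext hu]
    exact (hasDerivAt_arccos (by linarith) hf_upper.ne).comp s
      (hasDerivAt_cos_sub_mul_div_cos sy (cos R) (cos_pos_of_mem_Ioo (hI s hs.le hs'.le)).ne')
  rw [hderiv.deriv]
  exact mul_nonpos_of_nonpos_of_nonneg (neg_nonpos.mpr (by positivity)) (by positivity)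

/-- in the spherical case with
`u(s) = arccos(cos(s - s_y)·cos(R)/cos(s))`, `R ∈ (0, π/2)`, `s_y ∈ [0, R)` and
`cos(R + s_y) > 0`, one has `u'(s) ≤ 0` for all `s ∈ (-R, R)`. -/
theorem stmt7 (R sy : ℝ) (hR : 0 < R) (hR' : R < Real.pi / 2)
    (hsy : 0 ≤ sy) (hsyR : sy < R) (hcos : 0 < Real.cos (R + sy))
    (u : ℝ → ℝ)
    (hu : ∀ s, u s = Real.arccos (Real.cos (s - sy) * Real.cos R / Real.cos s))
    (s : ℝ) (hs : -R < s) (hs' : s < R) :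
    deriv u s ≤ 0 :=
  stmt7_general R sy hR' hsy hsyR hcos u hu s hs hs'
end
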